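/- Let T be a set and let K ⊆ ℝ^T be a compact max-plus convex subset. A closed subset A ⊆ K satisfies conv_I(A) = A if and only if A is max-plus convex; that is, the family of I-convex subsets of (K, β_K) coincides with the family of closed max-plus convex subsets of K. -/

import Mathlib

/-- An idempotent (Maslov) probability measure on `X`:
a functional on `C(X, ℝ)` preserving constants, translation by constants,
and finite maxima. -/
def IsIdempotentMeasure {X : Type*} [TopologicalSpace X] (μ : C(X, ℝ) → ℝ) : Prop :=
  μ 1 = 1 ∧
  (∀ (l : ℝ) (φ : C(X, ℝ)), μ (ContinuousMap.const X l + φ) = l + μ φ) ∧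
  (∀ ψ φ : C(X, ℝ), μ (ψ ⊔ φ) = max (μ ψ) (μ φ))
/-- The space `IX` of idempotent measures, topologized as a subspace of `ℝ^{C(X)}`. -/
abbrev IspX (X : Type*) [TopologicalSpace X] := {μ : C(X, ℝ) → ℝ // IsIdempotentMeasure μ}
/-- A subset `K ⊆ ℝ^T` is max-plus convex if for all `a, b ∈ K` and
`λ ∈ [-∞, 0]`, the coordinatewise maximum `(λ + a) ∨ b` belongs to `K`
(with `-∞ + x = -∞` and `max(-∞, x) = x`). -/
def MaxPlusConvexSet {T : Type*} (K : Set (T → ℝ)) : Prop :=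
  ∀ a ∈ K, ∀ b ∈ K, ∀ l : EReal, l ≤ 0 →
    ∃ c ∈ K, ∀ t : T, (c t : EReal) = (l + (a t : EReal)) ⊔ (b t : EReal)

/-- For `t ∈ T`, the coordinate projection `f_t = pr_t|_K ∈ C(K)`. -/
noncomputable def coordMap {T : Type*} (K : Set (T → ℝ)) (t : T) : C(↥K, ℝ) :=
  ⟨fun k => (k : T → ℝ) t, (continuous_apply t).comp continuous_subtype_val⟩

/-- The equivalence relation on `Z` collapsing the subset `A` to one point:
classes are the singletons `{x}`, `x ∉ A`, and the set `A`. -/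
def collapseSetoid {Z : Type*} (A : Set Z) : Setoid Z where
  r x y := x = y ∨ (x ∈ A ∧ y ∈ A)
  iseqv := ⟨fun _ => Or.inl rfl,
    fun h => h.elim (fun e => Or.inl e.symm) (fun h' => Or.inr ⟨h'.2, h'.1⟩),
    fun h1 h2 => by
      rcases h1 with rfl | h1
      · exact h2
      · rcases h2 with rfl | h2
        · exact Or.inr h1
        · exact Or.inr ⟨h1.1, h2.2⟩⟩

/-- The quotient space `Z/A` obtained by collapsing `A` to a point. -/
def QuotSp {Z : Type*} (A : Set Z) : Type _ := Quotient (collapseSetoid A)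

/-- The quotient map `χ_A : Z → Z/A`. -/
def qmk {Z : Type*} (A : Set Z) (z : Z) : QuotSp A := Quotient.mk (collapseSetoid A) z

/-- The quotient topology on `Z/A`. -/
instance {Z : Type*} [TopologicalSpace Z] (A : Set Z) : TopologicalSpace (QuotSp A) :=
  TopologicalSpace.coinduced (qmk A) inferInstance

/-- The quotient map `χ_A` as a continuous map. -/
def qmkC {Z : Type*} [TopologicalSpace Z] (A : Set Z) : C(Z, QuotSp A) :=
  ⟨qmk A, continuous_coinduced_rng⟩

/-!
If `conv_I A = A`, then for `a, b ∈ A` and `r ≤ 0` the idempotent measure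
`φ ↦ max (r + φ a) (φ b)` lies in `A⁺` and its barycenter is `(r + a) ∨ b`, which is therefore
in `A`.

Conversely, a measure `ν ∈ A⁺` kills every function vanishing on `A`, and by compactness, for
each `φ` and `ε > 0` some `x ∈ A` nearly maximizes `ψ x - ν ψ` up to `φ x - ν φ + ε` uniformly
in `ψ`. For `φ = 0` and `φ = pr_t` these points, combined by a finite max-plus combination inside
`A`, approximate the barycenter `t ↦ ν (pr_t)` on any finite set of coordinates; as `A` is closed,
the barycenter lies in `A`.
-/

open Set Filter Topology

namespace IsIdempotentMeasure

variable {X : Type*} [TopologicalSpace X] {μ : C(X, ℝ) → ℝ}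

lemma nonempty (h : IsIdempotentMeasure μ) : Nonempty X := by
  by_contra hX
  rw [not_nonempty_iff] at hX
  have h2 := h.2.1 2 1
  have h1 : μ (ContinuousMap.const X 2 + 1) = μ 1 :=
    congrArg μ (ContinuousMap.ext fun x => isEmptyElim x)
  linarith

lemma map_const (h : IsIdempotentMeasure μ) (r : ℝ) : μ (ContinuousMap.const X r) = r := by
  have h2 := h.2.1 (r - 1) 1
  rw [show ContinuousMap.const X (r - 1) + 1 = ContinuousMap.const X r by ext; simp, h.1] at h2
  linarith

lemma map_zero (h : IsIdempotentMeasure μ) : μ 0 = 0 := h.map_const 0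

lemma mono (h : IsIdempotentMeasure μ) {φ ψ : C(X, ℝ)} (hle : φ ≤ ψ) : μ φ ≤ μ ψ := by
  have h3 := h.2.2 φ ψ
  rw [sup_eq_right.mpr hle] at h3
  exact h3 ▸ le_max_left _ _

lemma map_add_const (h : IsIdempotentMeasure μ) (φ : C(X, ℝ)) (c : ℝ) :
    μ (φ + ContinuousMap.const X c) = μ φ + c := by
  rw [add_comm φ, h.2.1, add_comm]

lemma map_finset_sup' (h : IsIdempotentMeasure μ) {ι : Type*} {s : Finset ι}
    (hs : s.Nonempty) (f : ι → C(X, ℝ)) : μ (s.sup' hs f) = s.sup' hs fun i => μ (f i) := by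
  induction hs using Finset.Nonempty.cons_induction with
  | singleton a => simp
  | cons a s ha hs ih => rw [Finset.sup'_cons hs, Finset.sup'_cons hs, h.2.2, ih]

lemma exists_forall_sub_le [CompactSpace X] (h : IsIdempotentMeasure μ) (φ : C(X, ℝ))
    {ε : ℝ} (hε : 0 < ε) : ∃ x, ∀ ψ : C(X, ℝ), ψ x - μ ψ ≤ φ x - μ φ + ε := by
  have := h.nonempty
  let C : C(X, ℝ) → Set X := fun ψ => {x | ψ x - μ ψ ≤ φ x - μ φ + ε}
  have hC : ∀ ψ, IsClosed (C ψ) := fun ψ => isClosed_le (by fun_prop) (by fun_prop)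
  suffices hfin : ∀ u : Finset C(X, ℝ), (univ ∩ ⋂ ψ ∈ u, C ψ).Nonempty by
    simpa [C] using isCompact_univ.inter_iInter_nonempty C hC hfin
  intro u
  rcases u.eq_empty_or_nonempty with rfl | hu
  · simp
  by_contra hempty
  have hbeat : ∀ x, ∃ ψ ∈ u, φ x - μ φ + ε < ψ x - μ ψ := fun x => by
    by_contra! hx
    exact hempty ⟨x, mem_univ x, mem_iInter₂.2 hx⟩
  -- otherwise `φ ≤ ρ`, while `μ ρ = μ φ - ε`
  set ρ := u.sup' hu fun ψ => ψ + ContinuousMap.const X (μ φ - μ ψ - ε) with hρ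
  have hμρ : μ ρ = μ φ - ε := by
    rw [hρ, h.map_finset_sup']
    have hcancel : ∀ ψ, μ ψ + (μ φ - μ ψ - ε) = μ φ - ε := fun _ => by ring
    simp only [h.map_add_const, hcancel]
    exact Finset.sup'_const hu _
  have hφρ : φ ≤ ρ := ContinuousMap.le_def.2 fun x => by
    obtain ⟨ψ, hψ, hlt⟩ := hbeat x
    have := Finset.le_sup' (fun ψ => ψ x + (μ φ - μ ψ - ε)) hψ
    simp only [hρ, ContinuousMap.sup'_apply, ContinuousMap.add_apply,
      ContinuousMap.const_apply]
    linarith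
  linarith [h.mono hφρ]

end IsIdempotentMeasure

lemma isIdempotentMeasure_eval {X : Type*} [TopologicalSpace X] (x : X) :
    IsIdempotentMeasure fun φ : C(X, ℝ) => φ x :=
  ⟨rfl, fun _ _ => rfl, fun _ _ => rfl⟩

lemma isIdempotentMeasure_max_add_eval {X : Type*} [TopologicalSpace X] (a b : X) {r : ℝ}
    (hr : r ≤ 0) :
    IsIdempotentMeasure fun φ : C(X, ℝ) => max (r + φ a) (φ b) := by
  refine ⟨max_eq_right (by simpa using hr), fun l φ => ?_, fun ψ φ => ?_⟩
  · simp only [ContinuousMap.add_apply, ContinuousMap.const_apply]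
    rw [add_left_comm, max_add_add_left]
  · simp only [ContinuousMap.sup_apply]
    rw [← max_add_add_left, max_max_max_comm]

lemma mem_of_forall_sub_map_le {X : Type*} [TopologicalSpace X] [CompletelyRegularSpace X]
    {μ : C(X, ℝ) → ℝ} {A : Set X} (hA : IsClosed A)
    (hμA : ∀ φ : C(X, ℝ), EqOn φ 0 A → μ φ = 0) {x : X} {C : ℝ}
    (hx : ∀ ψ : C(X, ℝ), ψ x - μ ψ ≤ C) : x ∈ A := by
  by_contra hxA
  obtain ⟨f, hf, hfx, hfA⟩ := CompletelyRegularSpace.completely_regular x A hA hxA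
  let ψ : C(X, ℝ) := ⟨fun y => (C + 1) * (1 - f y), by fun_prop⟩
  have hψA : EqOn ψ 0 A := fun y hy => by simp [ψ, hfA hy]
  have := hx ψ
  simp only [ψ, ContinuousMap.coe_mk, hfx, Set.Icc.coe_zero, sub_zero, mul_one, hμA ψ hψA] at this
  linarith

/-- `μ ∈ A⁺`: the push-forward of `μ` along `X → X/A` is the Dirac measure at the point `A`. -/
def IsConcentratedOn {X : Type*} [TopologicalSpace X] (A : Set X) (μ : C(X, ℝ) → ℝ) : Prop :=
  ∀ x₀ ∈ A, ∀ ψ : C(QuotSp A, ℝ), μ (ψ.comp (qmkC A)) = ψ (qmk A x₀)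

lemma qmk_eq_qmk {Z : Type*} {A : Set Z} {a b : Z} (ha : a ∈ A) (hb : b ∈ A) :
    qmk A a = qmk A b :=
  Quotient.sound (Or.inr ⟨ha, hb⟩)

namespace IsConcentratedOn

variable {X : Type*} [TopologicalSpace X] {A : Set X} {μ : C(X, ℝ) → ℝ}

lemma eval {x : X} (hx : x ∈ A) : IsConcentratedOn A fun φ => φ x :=
  fun _ hx₀ ψ => congrArg ψ (qmk_eq_qmk hx hx₀)

lemma max_add_eval {a b : X} (ha : a ∈ A) (hb : b ∈ A) {r : ℝ} (hr : r ≤ 0) :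
    IsConcentratedOn A fun φ => max (r + φ a) (φ b) := fun _ hx₀ ψ => by
  simp only [ContinuousMap.comp_apply, qmkC, ContinuousMap.coe_mk, qmk_eq_qmk ha hx₀,
    qmk_eq_qmk hb hx₀]
  exact max_eq_right (by linarith)

lemma map_eq_zero (hμ : IsConcentratedOn A μ) {x₀ : X} (hx₀ : x₀ ∈ A) {φ : C(X, ℝ)}
    (hφ : EqOn φ 0 A) : μ φ = 0 := by
  -- `φ` factors through the collapse `X → X/A`
  have hresp : ∀ x y, (collapseSetoid A).r x y → φ x = φ y := by
    rintro x y (rfl | ⟨hx, hy⟩)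
    · rfl
    · exact (hφ hx).trans (hφ hy).symm
  let φ' : C(QuotSp A, ℝ) :=
    ⟨Quotient.lift φ hresp, continuous_coinduced_dom.mpr φ.continuous⟩
  exact (hμ x₀ hx₀ φ').trans (hφ hx₀)

lemma exists_mem_forall_sub_le [CompactSpace X] [CompletelyRegularSpace X]
    (hμ : IsConcentratedOn A μ) (hμI : IsIdempotentMeasure μ) (hA : IsClosed A)
    {x₀ : X} (hx₀ : x₀ ∈ A) (φ : C(X, ℝ)) {ε : ℝ} (hε : 0 < ε) :
    ∃ x ∈ A, ∀ ψ : C(X, ℝ), ψ x - μ ψ ≤ φ x - μ φ + ε := by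
  obtain ⟨x, hx⟩ := hμI.exists_forall_sub_le φ hε
  exact ⟨x, mem_of_forall_sub_map_le hA (fun _ => hμ.map_eq_zero hx₀) hx, hx⟩

end IsConcentratedOn

lemma maxPlusConvexSet_iff_real {T : Type*} {S : Set (T → ℝ)} :
    MaxPlusConvexSet S ↔
      ∀ a ∈ S, ∀ b ∈ S, ∀ r : ℝ, r ≤ 0 → ∃ c ∈ S, ∀ t, c t = max (r + a t) (b t) := by
  refine ⟨fun hS a ha b hb r hr => ?_, fun hS a ha b hb l hl => ?_⟩
  · obtain ⟨c, hc, hct⟩ := hS a ha b hb r (EReal.coe_nonpos.2 hr)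
    refine ⟨c, hc, fun t => EReal.coe_injective ?_⟩
    rw [hct, EReal.coe_strictMono.monotone.map_max, EReal.coe_add]
  · induction l using EReal.rec with
    | bot => exact ⟨b, hb, fun t => by simp⟩
    | top => simp at hl
    | coe r =>
      obtain ⟨c, hc, hct⟩ := hS a ha b hb r (EReal.coe_nonpos.1 hl)
      exact ⟨c, hc, fun t => by rw [hct, EReal.coe_strictMono.monotone.map_max, EReal.coe_add]⟩

namespace MaxPlusConvexSet

variable {T : Type*} {S : Set (T → ℝ)}

lemma exists_eq_fold_max (hS : MaxPlusConvexSet S) {ι : Type*} [DecidableEq ι]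
    (s : Finset ι) {r : ι → ℝ} (hr : ∀ i ∈ s, r i ≤ 0) {x : ι → T → ℝ} (hx : ∀ i ∈ s, x i ∈ S)
    {x₀ : T → ℝ} (hx₀ : x₀ ∈ S) :
    ∃ b ∈ S, ∀ t, b t = s.fold max (x₀ t) fun i => r i + x i t := by
  induction s using Finset.induction_on with
  | empty => exact ⟨x₀, hx₀, fun t => rfl⟩
  | insert i s hi ih =>
    obtain ⟨b, hb, hbt⟩ := ih (fun j hj => hr j (by simp [hj])) fun j hj => hx j (by simp [hj])
    obtain ⟨c, hc, hct⟩ := maxPlusConvexSet_iff_real.1 hS (x i) (hx i (by simp)) b hb (r i)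
      (hr i (by simp))
    exact ⟨c, hc, fun t => by rw [Finset.fold_insert hi, hct, hbt]⟩

lemma mem_closure (hS : MaxPlusConvexSet S) {c : T → ℝ}
    (h : ∀ ε > 0, (∃ x₀ ∈ S, ∀ s, x₀ s ≤ c s + ε) ∧
      ∀ t, ∃ y ∈ S, c t - ε ≤ y t ∧ ∀ s, y s - c s ≤ y t - c t + ε) :
    c ∈ closure S := by
  classical
  rw [mem_closure_iff_nhds]
  intro U hU
  rw [nhds_pi, Filter.mem_pi'] at hU
  obtain ⟨F, V, hV, hFU⟩ := hU
  have hsmall : ∀ᶠ ε in 𝓝[>] (0 : ℝ), ε ∈ Ioi 0 ∧ ∀ t ∈ F, Metric.closedBall (c t) ε ⊆ V t :=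
    eventually_mem_nhdsWithin.and <| nhdsWithin_le_nhds <|
      F.eventually_all.2 fun t _ => eventually_closedBall_subset (hV t)
  obtain ⟨ε, hε : 0 < ε, hεV⟩ := hsmall.exists
  obtain ⟨⟨x₀, hx₀, hx₀c⟩, hy⟩ := h ε hε
  choose y hyS hyt hys using hy
  obtain ⟨b, hb, hbt⟩ := hS.exists_eq_fold_max F (r := fun t => c t - y t t - ε)
    (fun t _ => by linarith [hyt t]) (fun t _ => hyS t) hx₀
  refine ⟨b, hFU fun t ht => hεV t ht ?_, hb⟩
  rw [Metric.mem_closedBall, Real.dist_eq, abs_le, hbt]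
  constructor
  · have : c t - ε ≤ F.fold max (x₀ t) fun i => c i - y i i - ε + y i t :=
      (Finset.le_fold_max _).2 (Or.inr ⟨t, ht, by linarith⟩)
    linarith
  · have : (F.fold max (x₀ t) fun i => c i - y i i - ε + y i t) ≤ c t + ε :=
      (Finset.fold_max_le _).2 ⟨hx₀c t, fun s _ => by linarith [hys s t]⟩
    linarith

end MaxPlusConvexSet

@[simp]
lemma coordMap_apply {T : Type*} (K : Set (T → ℝ)) (t : T) (x : K) :
    coordMap K t x = (x : T → ℝ) t :=
  rfl

lemma maxPlusConvexSet_image_val_iff {T : Type*} {K : Set (T → ℝ)} {A : Set K} :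
    MaxPlusConvexSet (Subtype.val '' A) ↔
    ∀ a ∈ A, ∀ b ∈ A, ∀ l : EReal, l ≤ 0 →
      ∃ c ∈ A, ∀ t : T,
        ((c : T → ℝ) t : EReal) = (l + ((a : T → ℝ) t : EReal)) ⊔ ((b : T → ℝ) t : EReal) := by
  simp [MaxPlusConvexSet]

lemma IsConcentratedOn.coordMap_mem {T : Type*} {K : Set (T → ℝ)} (hK : IsCompact K)
    {A : Set K} (hA : IsClosed A) (hAconv : MaxPlusConvexSet (Subtype.val '' A)) {x₀ : K}
    (hx₀ : x₀ ∈ A) {ν : C(K, ℝ) → ℝ} (hν : IsIdempotentMeasure ν) (hνA : IsConcentratedOn A ν) :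
    (fun t => ν (coordMap K t)) ∈ Subtype.val '' A := by
  have := isCompact_iff_compactSpace.mp hK
  rw [← (hA.isCompact.image continuous_subtype_val).isClosed.closure_eq]
  refine hAconv.mem_closure fun ε hε => ⟨?_, fun t => ?_⟩
  · obtain ⟨x, hxA, hx⟩ := hνA.exists_mem_forall_sub_le hν hA hx₀ 0 hε
    refine ⟨x, ⟨x, hxA, rfl⟩, fun s => ?_⟩
    have := hx (coordMap K s)
    simp only [coordMap_apply, ContinuousMap.zero_apply, hν.map_zero] at this
    linarith
  · obtain ⟨y, hyA, hy⟩ := hνA.exists_mem_forall_sub_le hν hA hx₀ (coordMap K t) hε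
    refine ⟨y, ⟨y, hyA, rfl⟩, ?_, fun s => hy (coordMap K s)⟩
    have := hy 0
    simp only [coordMap_apply, ContinuousMap.zero_apply, hν.map_zero] at this
    linarith

open Classical in
theorem stmt19_general {T : Type*} (K : Set (T → ℝ)) (hK : IsCompact K)
    (β : C(IspX ↥K, ↥K))
    (hβ : ∀ (ν : IspX ↥K) (t : T), ((β ν : ↥K) : T → ℝ) t = ν.1 (coordMap K t))
    (A : Set ↥K) (hA : IsClosed A) :
    (if A = ∅ then (∅ : Set ↥K)
     else ⇑β '' {ν : IspX ↥K | ∀ x₀ ∈ A, ∀ ψ : C(QuotSp A, ℝ),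
        ν.1 (ψ.comp (qmkC A)) = ψ (qmk A x₀)}) = A ↔
    (∀ a ∈ A, ∀ b ∈ A, ∀ l : EReal, l ≤ 0 →
      ∃ c ∈ A, ∀ t : T,
        ((c : T → ℝ) t : EReal) = (l + ((a : T → ℝ) t : EReal)) ⊔ ((b : T → ℝ) t : EReal)) := by
  rw [← maxPlusConvexSet_image_val_iff]
  rcases A.eq_empty_or_nonempty with rfl | hne
  · simp [MaxPlusConvexSet]
  rw [if_neg hne.ne_empty]
  obtain ⟨x₀, hx₀⟩ := hne
  constructor
  · intro hconv
    refine maxPlusConvexSet_iff_real.2 ?_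
    rintro _ ⟨a, ha, rfl⟩ _ ⟨b, hb, rfl⟩ r hr
    let μ : IspX K := ⟨_, isIdempotentMeasure_max_add_eval a b hr⟩
    have hμA : β μ ∈ A := hconv ▸ mem_image_of_mem β (IsConcentratedOn.max_add_eval ha hb hr)
    exact ⟨β μ, ⟨_, hμA, rfl⟩, hβ μ⟩
  · intro hconv
    refine Subset.antisymm ?_ fun x hx => ⟨⟨_, isIdempotentMeasure_eval x⟩,
      IsConcentratedOn.eval hx, Subtype.ext (funext fun t => hβ _ t)⟩
    rintro _ ⟨ν, hνA, rfl⟩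
    obtain ⟨y, hyA, hy⟩ := IsConcentratedOn.coordMap_mem hK hA hconv hx₀ ν.2 hνA
    convert hyA
    exact Subtype.ext (funext fun t => (hβ ν t).trans (congrFun hy t).symm)

open Classical in
/-- Let `K ⊆ ℝ^T` be a compact max-plus convex subset with
idempotent barycenter map `β_K` (determined by `pr_t (β_K ν) = ν(f_t)`), and let
`A ⊆ K` be closed.  Then `conv_I(A) = A` if and only if `A` is max-plus convex.
Here `conv_I(∅) = ∅` and, for `A ≠ ∅`,
`conv_I(A) = β_K(A⁺)` with `A⁺ = (Iχ_A)⁻¹(η(K/A)(a))`, i.e. `A⁺` is the set of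
`ν ∈ IK` with `ν(ψ ∘ χ_A) = ψ(a)` for all `ψ ∈ C(K/A)`, where `χ_A : K → K/A`
collapses `A` to the point `a = χ_A(x₀)`, `x₀ ∈ A`. -/
theorem stmt19 {T : Type*} (K : Set (T → ℝ)) (hK : IsCompact K)
    (hKconv : MaxPlusConvexSet K)
    (β : C(IspX ↥K, ↥K))
    (hβ : ∀ (ν : IspX ↥K) (t : T), ((β ν : ↥K) : T → ℝ) t = ν.1 (coordMap K t))
    (A : Set ↥K) (hA : IsClosed A) :
    (if A = ∅ then (∅ : Set ↥K)
     else ⇑β '' {ν : IspX ↥K | ∀ x₀ ∈ A, ∀ ψ : C(QuotSp A, ℝ),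
        ν.1 (ψ.comp (qmkC A)) = ψ (qmk A x₀)}) = A ↔
    (∀ a ∈ A, ∀ b ∈ A, ∀ l : EReal, l ≤ 0 →
      ∃ c ∈ A, ∀ t : T,
        ((c : T → ℝ) t : EReal) = (l + ((a : T → ℝ) t : EReal)) ⊔ ((b : T → ℝ) t : EReal)) :=
  stmt19_general K hK β hβ A hA
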